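/- Let d ≥ 1, let Σ be a d×d real symmetric positive definite matrix with positive definite square root Σ^{1/2}, and let X be a d×d real symmetric positive definite matrix such that (Σ^{1/2} R Σ^{-1/2}) X (Σ^{1/2} R Σ^{-1/2})ᵀ = X for every R ∈ SO(d). Then there exists a real number c > 0 such that X = c • Σ. -/

import Mathlib

/-!
Write `A = Σ^{1/2}`. Conjugating by `A` turns the hypothesis into `R Y Rᵀ = Y` for every
`R ∈ SO(d)`, where `Y = A⁻¹ X A⁻¹` is again positive definite. Testing this against the quarter
turns in the coordinate planes shows that the diagonal entries of `Y` agree and that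
`Y i j = -Y j i`, so the symmetric matrix `Y` is `c • 1` with `c > 0`, and `X = A Y A = c • Σ`.
-/

open Matrix
open scoped Classical

/-- The positive semidefinite square root of a matrix, extended to a total function
(junk value `0` when the matrix is not positive semidefinite). -/

noncomputable def matSqrt {d : ℕ} (A : Matrix (Fin d) (Fin d) ℝ) : Matrix (Fin d) (Fin d) ℝ :=
  if hA : A.PosSemidef then
    (hA.1.eigenvectorUnitary : Matrix (Fin d) (Fin d) ℝ) * diagonal (Real.sqrt ∘ hA.1.eigenvalues) *
      (star hA.1.eigenvectorUnitary : Matrix (Fin d) (Fin d) ℝ) else 0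

namespace Matrix

variable {n α : Type*} [Fintype n] [DecidableEq n] [CommRing α]

/-- The rotation by a right angle in the plane of the coordinates `i` and `j`:
`eᵢ ↦ -eⱼ` and `eⱼ ↦ eᵢ`. -/
def quarterTurn (i j : n) : Matrix n n α :=
  (Equiv.swap i j).permMatrix α * diagonal fun k => if k = i then -1 else 1

theorem quarterTurn_mem_specialOrthogonalGroup {i j : n} (hij : i ≠ j) :
    quarterTurn i j ∈ specialOrthogonalGroup n α := by
  have hsign : (diagonal fun k : n => if k = i then (-1 : α) else 1) *
      diagonal (fun k => if k = i then -1 else 1) = 1 := by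
    rw [diagonal_mul_diagonal, ← diagonal_one]
    congr 1
    funext k
    split_ifs <;> simp
  rw [mem_specialOrthogonalGroup_iff, mem_orthogonalGroup_iff]
  refine ⟨?_, ?_⟩
  · rw [quarterTurn, transpose_mul, diagonal_transpose, mul_assoc, ← mul_assoc (diagonal _),
      hsign, one_mul, transpose_permMatrix, ← permMatrix_mul, inv_mul_cancel, permMatrix_one]
  · simp [quarterTurn, det_diagonal, Finset.prod_ite_eq', Equiv.Perm.sign_swap hij]

theorem quarterTurn_mul_mul_transpose_apply (i j : n) (Y : Matrix n n α) (a b : n) :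
    (quarterTurn i j * Y * (quarterTurn i j)ᵀ : Matrix n n α) a b =
      (if Equiv.swap i j a = i then -1 else 1) * (if Equiv.swap i j b = i then -1 else 1) *
        Y (Equiv.swap i j a) (Equiv.swap i j b) := by
  rw [quarterTurn, transpose_mul, diagonal_transpose, transpose_permMatrix, Equiv.swap_inv]
  simp only [mul_assoc]
  rw [PEquiv.toMatrix_toPEquiv_mul, ← mul_assoc, ← mul_assoc, Equiv.Perm.permMatrix,
    PEquiv.mul_toMatrix_toPEquiv]
  simp [mul_diagonal, diagonal_mul]

theorem mul_mul_transpose_eq_of_conj {A R X : Matrix n n α} (hA : IsUnit A) (hAt : Aᵀ = A)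
    (h : A * R * A⁻¹ * X * (A * R * A⁻¹)ᵀ = X) :
    R * (A⁻¹ * X * A⁻¹) * Rᵀ = A⁻¹ * X * A⁻¹ := by
  have hdet := (isUnit_iff_isUnit_det A).1 hA
  have hinvt : (A⁻¹)ᵀ = A⁻¹ := by rw [transpose_nonsing_inv, hAt]
  calc R * (A⁻¹ * X * A⁻¹) * Rᵀ = A⁻¹ * (A * R * A⁻¹ * X * (A * R * A⁻¹)ᵀ) * A⁻¹ := by
        rw [transpose_mul, transpose_mul, hinvt, hAt]
        simp only [mul_assoc, nonsing_inv_mul_cancel_left _ _ hdet, mul_nonsing_inv _ hdet,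
          mul_one]
    _ = A⁻¹ * X * A⁻¹ := by rw [h]

theorem eq_smul_one_of_forall_specialOrthogonal_conj [IsAddTorsionFree α] {Y : Matrix n n α}
    (hY : Yᵀ = Y) (hfix : ∀ R ∈ specialOrthogonalGroup n α, R * Y * Rᵀ = Y) (i : n) :
    Y = Y i i • 1 := by
  have hturn (a b : n) (hab : a ≠ b) (x y : n) : Y x y =
      (if Equiv.swap a b x = a then -1 else 1) * (if Equiv.swap a b y = a then -1 else 1) *
        Y (Equiv.swap a b x) (Equiv.swap a b y) := by
    rw [← quarterTurn_mul_mul_transpose_apply,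
      hfix _ (quarterTurn_mem_specialOrthogonalGroup hab)]
  have hdiag (j : n) : Y j j = Y i i := by
    by_cases hji : j = i
    · rw [hji]
    · simpa [hji] using hturn i j (Ne.symm hji) j j
  have hoff (a b : n) (hab : a ≠ b) : Y a b = 0 := by
    have h := hturn a b hab a b
    simp only [Equiv.swap_apply_left, Equiv.swap_apply_right, if_neg hab.symm, if_pos] at h
    have hsymm : Y b a = Y a b := congrFun₂ hY a b
    exact self_eq_neg.1 (by simpa [hsymm] using h)
  ext a b
  by_cases hab : a = b
  · simp [hab, hdiag]
  · simp [hab, hoff a b hab]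

theorem PosDef.exists_pos_eq_smul_one_of_forall_specialOrthogonal_conj {Y : Matrix n n ℝ}
    (hY : Y.PosDef) (hfix : ∀ R ∈ specialOrthogonalGroup n ℝ, R * Y * Rᵀ = Y) :
    ∃ c : ℝ, 0 < c ∧ Y = c • 1 := by
  cases isEmpty_or_nonempty n with
  | inl _ => exact ⟨1, one_pos, Subsingleton.elim _ _⟩
  | inr hn =>
    obtain ⟨i⟩ := hn
    have hYt : Yᵀ = Y := (conjTranspose_eq_transpose_of_trivial Y).symm.trans hY.isHermitian
    exact ⟨Y i i, hY.diag_pos, eq_smul_one_of_forall_specialOrthogonal_conj hYt hfix i⟩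

end Matrix

section MatSqrt

open scoped MatrixOrder

variable {d : ℕ} {A : Matrix (Fin d) (Fin d) ℝ}

theorem matSqrt_eq_sqrt (hA : A.PosSemidef) : matSqrt A = CFC.sqrt A := by
  rw [CFC.sqrt_eq_real_sqrt A hA.nonneg, cfcₙ_eq_cfc, hA.1.cfc_eq, matSqrt, dif_pos hA,
    IsHermitian.cfc, Unitary.conjStarAlgAut_apply]
  rfl

theorem matSqrt_mul_self (hA : A.PosSemidef) : matSqrt A * matSqrt A = A := by
  rw [matSqrt_eq_sqrt hA]
  exact CFC.sqrt_mul_sqrt_self A hA.nonneg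

theorem transpose_matSqrt (hA : A.PosSemidef) : (matSqrt A)ᵀ = matSqrt A := by
  rw [matSqrt_eq_sqrt hA, ← conjTranspose_eq_transpose_of_trivial]
  exact (nonneg_iff_posSemidef.1 (CFC.sqrt_nonneg A)).isHermitian

theorem Matrix.PosDef.isUnit_matSqrt (hA : A.PosDef) : IsUnit (matSqrt A) := by
  rw [matSqrt_eq_sqrt hA.posSemidef, CFC.isUnit_sqrt_iff A hA.posSemidef.nonneg]
  exact hA.isUnit

end MatSqrt

theorem fixed_by_H_sigma_implies_multiple_general (d : ℕ)
    (S X : Matrix (Fin d) (Fin d) ℝ) (hS : S.PosDef) (hX : X.PosDef)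
    (hfix : ∀ R : Matrix (Fin d) (Fin d) ℝ, R * Rᵀ = 1 → R.det = 1 →
      (matSqrt S * R * (matSqrt S)⁻¹) * X * (matSqrt S * R * (matSqrt S)⁻¹)ᵀ = X) :
    ∃ c : ℝ, 0 < c ∧ X = c • S := by
  set A := matSqrt S
  have hA : IsUnit A := hS.isUnit_matSqrt
  have hAt : Aᵀ = A := transpose_matSqrt hS.posSemidef
  have hY : (A⁻¹ * X * A⁻¹).PosDef := by
    have hAinv : star A⁻¹ = A⁻¹ := by
      rw [star_eq_conjTranspose, conjTranspose_eq_transpose_of_trivial, transpose_nonsing_inv, hAt]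
    simpa [hAinv] using (isUnit_nonsing_inv_iff.2 hA).posDef_star_left_conjugate_iff.2 hX
  obtain ⟨c, hc, hYc⟩ := hY.exists_pos_eq_smul_one_of_forall_specialOrthogonal_conj
    fun R hR ↦ mul_mul_transpose_eq_of_conj hA hAt
      (hfix R ((mem_orthogonalGroup_iff _ _).1 hR.1) hR.2)
  refine ⟨c, hc, ?_⟩
  have hdet := (isUnit_iff_isUnit_det A).1 hA
  calc X = A * (A⁻¹ * X * A⁻¹) * A := by
        simp only [mul_assoc, nonsing_inv_mul _ hdet, mul_one, mul_nonsing_inv_cancel_left _ _ hdet]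
    _ = c • S := by
        rw [hYc, Matrix.mul_smul, mul_one, Matrix.smul_mul, matSqrt_mul_self hS.posSemidef]

/-- If a real symmetric positive definite `d × d` matrix `X` is fixed by the
action `G · X = G X Gᵀ` of every element `G = Σ^{1/2} R Σ^{-1/2}` of `H_Σ` (`R ∈ SO(d)`),
then `X = c • Σ` for some real `c > 0`. -/
theorem fixed_by_H_sigma_implies_multiple (d : ℕ) (hd : 1 ≤ d)
    (S X : Matrix (Fin d) (Fin d) ℝ) (hS : S.PosDef) (hX : X.PosDef)
    (hfix : ∀ R : Matrix (Fin d) (Fin d) ℝ, R * Rᵀ = 1 → R.det = 1 →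
      (matSqrt S * R * (matSqrt S)⁻¹) * X * (matSqrt S * R * (matSqrt S)⁻¹)ᵀ = X) :
    ∃ c : ℝ, 0 < c ∧ X = c • S :=
  fixed_by_H_sigma_implies_multiple_general d S X hS hX hfix
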